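/- arXiv:2411.13726 — 3 statements merged into one kernel-verified Lean document; each statement's English description precedes it below -/
import Mathlib

section
/- Let u satisfy g_{μν}u^μu^ν = -1 with u^0 > 0, and define B^{αi} := g^{αi} - g^{α0}(u^i/u^0) for spatial indices i ∈ {1,2,3}, G_{αβ} := g_{αβ} + 2u_αu_β, and H^{ij} := δ^{ij} - u^iu^j/(u^0)^2. Then G_{αβ} B^{αi} B^{βj} = H^{ij}. -/
set_option maxHeartbeats 4000000


open scoped BigOperators

/-- The Minkowski metric on `ℝ⁴` with signature `(-,+,+,+)` (self-inverse, so it also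
serves as `g^{αβ}`). -/
def gM (α β : Fin 4) : ℝ := if α = β then (if α = 0 then -1 else 1) else 0

/-- Lowering an index with the Minkowski metric: `u_α = g_{αμ} u^μ`. -/
def lowerM (u : Fin 4 → ℝ) (α : Fin 4) : ℝ := ∑ μ, gM α μ * u μ

/-- For a unit timelike `u` with `u⁰ > 0`, setting `B^{αi} = g^{αi} - g^{α0} u^i/u^0`,
`G_{αβ} = g_{αβ} + 2 u_α u_β` and `H^{ij} = δ^{ij} - u^i u^j/(u^0)²`, one has
`G_{αβ} B^{αi} B^{βj} = H^{ij}` for spatial indices `i, j`. -/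
theorem stmt1 (u : (Fin 4 → ℝ) → (Fin 4 → ℝ))
    (hu : ∀ x, ∑ μ, ∑ ν, gM μ ν * u x μ * u x ν = -1)
    (hu0 : ∀ x, 0 < u x 0) :
    ∀ x, ∀ i j : Fin 4, i ≠ 0 → j ≠ 0 →
      ∑ α, ∑ β, (gM α β + 2 * lowerM (u x) α * lowerM (u x) β)
          * (gM α i - gM α 0 * (u x i / u x 0))
          * (gM β j - gM β 0 * (u x j / u x 0))
        = (if i = j then 1 else 0) - u x i * u x j / (u x 0) ^ 2 := by
  intro x i j hi hj
  have h := hu x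
  simp [gM, Fin.sum_univ_four] at h
  have h0 : u x 0 ≠ 0 := (hu0 x).ne'
  fin_cases i <;> fin_cases j <;> simp_all <;>
    · simp [gM, lowerM, Fin.sum_univ_four]
      field_simp
      nlinarith [h, sq_nonneg (u x 0)]
end

section
/- Suppose (s, r, u) solve the system D_t s = 0, D_t r + (γ-1) r ∂_μ u^μ = 0, D_t u^α + (1/(Γ(s)+r)) Π^{αμ} ∂_μ r = 0, where Γ(s) = (γ-1)^{(γ-1)/γ} / (γ e^{((γ-1)/γ)s}) and Π^{αμ} = g^{αμ} + u^αu^μ. Then the enthalpy current v_α := h u_α with h := (Γ+r)/Γ satisfies u^α ω_{αβ} = (r/(γΓ)) (γ-1) ∂_β s, where ω_{αβ} := ∂_α v_β - ∂_β v_α. -/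
open scoped BigOperators

/-- The coordinate partial derivative `∂_μ f` on `ℝ⁴ = Fin 4 → ℝ`. -/
noncomputable def pd4 (μ : Fin 4) (f : (Fin 4 → ℝ) → ℝ) (x : Fin 4 → ℝ) : ℝ :=
  fderiv ℝ f x (Pi.single μ 1)

/-- `Γ(s) = (γ-1)^{(γ-1)/γ} / (γ e^{((γ-1)/γ) s})`. -/
noncomputable def Γfun (γ s : ℝ) : ℝ :=
  (γ - 1) ^ ((γ - 1) / γ) / (γ * Real.exp (((γ - 1) / γ) * s))

lemma pd4_mul {f g : (Fin 4 → ℝ) → ℝ} {x : Fin 4 → ℝ} {μ : Fin 4}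
    (hf : DifferentiableAt ℝ f x) (hg : DifferentiableAt ℝ g x) :
    pd4 μ (fun y => f y * g y) x = f x * pd4 μ g x + g x * pd4 μ f x := by
  unfold pd4; rw [fderiv_fun_mul hf hg]; simp

lemma pd4_add {f g : (Fin 4 → ℝ) → ℝ} {x : Fin 4 → ℝ} {μ : Fin 4}
    (hf : DifferentiableAt ℝ f x) (hg : DifferentiableAt ℝ g x) :
    pd4 μ (fun y => f y + g y) x = pd4 μ f x + pd4 μ g x := by
  unfold pd4; rw [fderiv_fun_add hf hg]; simp

lemma pd4_sub {f g : (Fin 4 → ℝ) → ℝ} {x : Fin 4 → ℝ} {μ : Fin 4}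
    (hf : DifferentiableAt ℝ f x) (hg : DifferentiableAt ℝ g x) :
    pd4 μ (fun y => f y - g y) x = pd4 μ f x - pd4 μ g x := by
  unfold pd4; rw [fderiv_fun_sub hf hg]; simp

lemma pd4_const_mul {f : (Fin 4 → ℝ) → ℝ} {x : Fin 4 → ℝ} {μ : Fin 4}
    (hf : DifferentiableAt ℝ f x) (c : ℝ) :
    pd4 μ (fun y => c * f y) x = c * pd4 μ f x := by
  unfold pd4; rw [fderiv_const_mul hf c]; simp

lemma pd4_exp {f : (Fin 4 → ℝ) → ℝ} {x : Fin 4 → ℝ} {μ : Fin 4}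
    (hf : DifferentiableAt ℝ f x) :
    pd4 μ (fun y => Real.exp (f y)) x = Real.exp (f x) * pd4 μ f x := by
  unfold pd4; rw [hf.hasFDerivAt.exp.fderiv]; simp

lemma pd4_inv {f : (Fin 4 → ℝ) → ℝ} {x : Fin 4 → ℝ} {μ : Fin 4}
    (hf : DifferentiableAt ℝ f x) (h0 : f x ≠ 0) :
    pd4 μ (fun y => (f y)⁻¹) x = -((f x)^2)⁻¹ * pd4 μ f x := by
  unfold pd4
  have h := (hasFDerivAt_inv h0).comp x hf.hasFDerivAt
  simp only [Function.comp_def] at h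
  rw [h.fderiv]; simp; ring

lemma lowerM_eq (v : Fin 4 → ℝ) (δ : Fin 4) :
    lowerM v δ = (if δ = 0 then (-1:ℝ) else 1) * v δ := by
  fin_cases δ <;> simp [lowerM, gM, Fin.sum_univ_four]

set_option maxHeartbeats 2000000 in
/-- If `(s, r, u)` solve `D_t s = 0`, `D_t r + (γ-1) r ∂_μ u^μ = 0`,
`D_t u^α + (1/(Γ(s)+r)) Π^{αμ} ∂_μ r = 0` (with `Π^{αμ} = g^{αμ} + u^α u^μ`) on an open
set `D`, with `u` unit timelike, then the enthalpy current `v_α = h u_α`,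
`h = (Γ+r)/Γ`, satisfies `u^α ω_{αβ} = (r/(γΓ)) (γ-1) ∂_β s` where
`ω_{αβ} = ∂_α v_β - ∂_β v_α`. -/
theorem stmt13 (γ : ℝ) (hγ : 1 < γ) (D : Set (Fin 4 → ℝ)) (hD : IsOpen D)
    (s r : (Fin 4 → ℝ) → ℝ) (u : (Fin 4 → ℝ) → (Fin 4 → ℝ))
    (hs : ContDiff ℝ (⊤ : ℕ∞) s) (hr : ContDiff ℝ (⊤ : ℕ∞) r)
    (hu : ∀ μ, ContDiff ℝ (⊤ : ℕ∞) (fun x => u x μ))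
    (hrpos : ∀ x ∈ D, 0 < r x)
    (hnorm : ∀ x ∈ D, ∑ μ, ∑ ν, gM μ ν * u x μ * u x ν = -1)
    (heqs : ∀ x ∈ D, ∑ μ, u x μ * pd4 μ s x = 0)
    (heqr : ∀ x ∈ D, ∑ μ, u x μ * pd4 μ r x
        + (γ - 1) * r x * ∑ μ, pd4 μ (fun y => u y μ) x = 0)
    (hequ : ∀ x ∈ D, ∀ α, ∑ μ, u x μ * pd4 μ (fun y => u y α) x
        + (1 / (Γfun γ (s x) + r x)) * ∑ μ, (gM α μ + u x α * u x μ) * pd4 μ r x = 0) :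
    ∀ x ∈ D, ∀ β,
      ∑ α, u x α *
        (pd4 α (fun y => ((Γfun γ (s y) + r y) / Γfun γ (s y)) * lowerM (u y) β) x
          - pd4 β (fun y => ((Γfun γ (s y) + r y) / Γfun γ (s y)) * lowerM (u y) α) x)
      = (r x / (γ * Γfun γ (s x))) * (γ - 1) * pd4 β s x := by
  intro x hxD β
  have hγ0 : (0:ℝ) < γ := by linarith
  have hsd := hs.differentiable (by norm_num)
  have hrd := hr.differentiable (by norm_num)
  have hud : ∀ ν, Differentiable ℝ (fun y => u y ν) := fun ν =>
    (hu ν).differentiable (by norm_num)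
  have hGfun : (fun z => Γfun γ (s z))
      = fun z => ((γ - 1) ^ ((γ - 1) / γ) / γ) * (Real.exp (((γ-1)/γ) * s z))⁻¹ := by
    funext z; rw [Γfun, div_eq_mul_inv, mul_inv]; ring
  have hEdiff : Differentiable ℝ (fun z => Real.exp (((γ-1)/γ) * s z)) :=
    (hsd.const_mul _).exp
  have hGdiff : Differentiable ℝ (fun z => Γfun γ (s z)) := by
    rw [hGfun]; exact (hEdiff.inv (fun y => (Real.exp_pos _).ne')).const_mul _
  have hGpos : ∀ t, 0 < Γfun γ t := fun t =>
    div_pos (Real.rpow_pos_of_pos (by linarith) _) (by positivity)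
  have hGne : ∀ z, Γfun γ (s z) ≠ 0 := fun z => (hGpos (s z)).ne'
  have hGrne : Γfun γ (s x) + r x ≠ 0 := by
    have := hGpos (s x); have := hrpos x hxD; positivity
  have hGd : ∀ μ, pd4 μ (fun z => Γfun γ (s z)) x
      = -((γ-1)/γ) * Γfun γ (s x) * pd4 μ s x := by
    intro μ
    rw [hGfun, pd4_const_mul ((hEdiff.differentiableAt).fun_inv (Real.exp_pos _).ne'),
      pd4_inv hEdiff.differentiableAt (Real.exp_pos _).ne',
      pd4_exp (hsd.const_mul _).differentiableAt,
      pd4_const_mul hsd.differentiableAt]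
    have := Real.exp_ne_zero (((γ-1)/γ) * s x)
    rw [Γfun]
    set A := (γ - 1) ^ ((γ - 1) / γ)
    set E := Real.exp (((γ-1)/γ) * s x)
    field_simp [hγ0.ne']
  have h1 : (fun z => (Γfun γ (s z) + r z) / Γfun γ (s z))
      = fun z => (Γfun γ (s z) + r z) * (Γfun γ (s z))⁻¹ := by
    funext z; rw [div_eq_mul_inv]
  have hHdiff : Differentiable ℝ (fun z => (Γfun γ (s z) + r z) / Γfun γ (s z)) := by
    rw [h1]; exact (hGdiff.add hrd).mul (hGdiff.inv hGne)
  have hHd : ∀ μ, pd4 μ (fun z => (Γfun γ (s z) + r z) / Γfun γ (s z)) x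
      = (pd4 μ r x + r x * ((γ-1)/γ) * pd4 μ s x) / Γfun γ (s x) := by
    intro μ
    rw [h1, pd4_mul (hGdiff.fun_add hrd).differentiableAt
        (hGdiff.differentiableAt.fun_inv (hGne x)),
      pd4_add hGdiff.differentiableAt hrd.differentiableAt,
      pd4_inv hGdiff.differentiableAt (hGne x), hGd μ]
    field_simp [hGne x]
    ring
  have hVd : ∀ μ δ,
      pd4 μ (fun y => ((Γfun γ (s y) + r y) / Γfun γ (s y)) * lowerM (u y) δ) x
      = (pd4 μ r x + r x * ((γ-1)/γ) * pd4 μ s x) / Γfun γ (s x)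
          * ((if δ = 0 then (-1:ℝ) else 1) * u x δ)
        + ((Γfun γ (s x) + r x) / Γfun γ (s x))
          * ((if δ = 0 then (-1:ℝ) else 1) * pd4 μ (fun y => u y δ) x) := by
    intro μ δ
    have h2 : (fun y => ((Γfun γ (s y) + r y) / Γfun γ (s y)) * lowerM (u y) δ)
        = fun y => ((Γfun γ (s y) + r y) / Γfun γ (s y))
            * ((if δ = 0 then (-1:ℝ) else 1) * u y δ) := by
      funext y; rw [lowerM_eq]
    rw [h2, pd4_mul hHdiff.differentiableAt ((hud δ).differentiableAt.const_mul _),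
      pd4_const_mul (hud δ).differentiableAt, hHd μ]
    ring
  -- norm derivative vanishes
  have hNfun : (fun y => ∑ μ, ∑ ν, gM μ ν * u y μ * u y ν)
      = fun y => u y 1 * u y 1 + (u y 2 * u y 2 + u y 3 * u y 3) - u y 0 * u y 0 := by
    funext y; simp [Fin.sum_univ_four, gM]; ring
  have hNzero : pd4 β (fun y => ∑ μ, ∑ ν, gM μ ν * u y μ * u y ν) x = 0 := by
    unfold pd4
    have hev : (fun y => ∑ μ, ∑ ν, gM μ ν * u y μ * u y ν) =ᶠ[nhds x]
        fun _ => (-1:ℝ) := Filter.eventuallyEq_of_mem (hD.mem_nhds hxD) hnorm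
    rw [hev.fderiv_eq]; simp
  have hmm : ∀ μ ν : Fin 4, DifferentiableAt ℝ (fun y => u y μ * u y ν) x :=
    fun μ ν => ((hud μ).mul (hud ν)).differentiableAt
  have e3 : u x 1 * pd4 β (fun y => u y 1) x + u x 2 * pd4 β (fun y => u y 2) x
      + u x 3 * pd4 β (fun y => u y 3) x - u x 0 * pd4 β (fun y => u y 0) x = 0 := by
    have h0 := hNzero
    rw [hNfun, pd4_sub ((hmm 1 1).fun_add ((hmm 2 2).fun_add (hmm 3 3))) (hmm 0 0),
      pd4_add (hmm 1 1) ((hmm 2 2).fun_add (hmm 3 3)), pd4_add (hmm 2 2) (hmm 3 3),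
      pd4_mul (hud 0).differentiableAt (hud 0).differentiableAt,
      pd4_mul (hud 1).differentiableAt (hud 1).differentiableAt,
      pd4_mul (hud 2).differentiableAt (hud 2).differentiableAt,
      pd4_mul (hud 3).differentiableAt (hud 3).differentiableAt] at h0
    linarith
  have e1 := heqs x hxD
  have e2 := hnorm x hxD
  have e4 := hequ x hxD β
  have hgMr : ∑ μ, (gM β μ + u x β * u x μ) * pd4 μ r x
      = (if β = 0 then (-1:ℝ) else 1) * pd4 β r x
        + u x β * ∑ μ, u x μ * pd4 μ r x := by
    have hl := lowerM_eq (fun μ => pd4 μ r x) β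
    unfold lowerM at hl
    rw [Finset.mul_sum, ← hl, ← Finset.sum_add_distrib]
    congr 1; funext μ; ring
  rw [hgMr] at e4
  obtain ⟨σ, hσ1, hσ⟩ : ∃ σ : ℝ, σ * σ = 1 ∧ (if β = 0 then (-1:ℝ) else 1) = σ :=
    ⟨_, by by_cases h : β = 0 <;> simp [h], rfl⟩
  simp only [hVd]
  rw [Fin.sum_univ_four] at e1 e4 ⊢
  rw [Fin.sum_univ_four] at e4
  simp [Fin.sum_univ_four, gM] at e2
  simp only [hσ] at e4 ⊢
  simp only [show ((1:Fin 4) = 0) = False by simp, show ((2:Fin 4) = 0) = False by simp,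
    show ((3:Fin 4) = 0) = False by simp, show ((0:Fin 4) = 0) = True by simp,
    if_true, if_false]
  have hH : (Γfun γ (s x) + r x) * (Γfun γ (s x) + r x)⁻¹ = 1 := mul_inv_cancel₀ hGrne
  linear_combination (σ * u x β * r x * ((γ-1)/γ) / Γfun γ (s x)) * e1
    + ((Γfun γ (s x) + r x) / Γfun γ (s x) * σ) * e4
    - (pd4 β r x / Γfun γ (s x)) * hσ1
    - (σ / Γfun γ (s x) * (σ * pd4 β r x + u x β * (u x 0 * pd4 0 r x + u x 1 * pd4 1 r x
        + u x 2 * pd4 2 r x + u x 3 * pd4 3 r x))) * hH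
    - ((pd4 β r x + r x * ((γ-1)/γ) * pd4 β s x) / Γfun γ (s x)) * e2
    - ((Γfun γ (s x) + r x) / Γfun γ (s x)) * e3
end

section
/- Let d(t,x) denote the distance from x to the boundary Γ_t, and suppose near the boundary the internal energy satisfies ε ~ d^σ (i.e., ε is comparable to d^σ) and n ~ d^β with β, σ > 0, where (ε, n, u) solve the momentum equation ((1+εγ)/(γ-1)) n u^μ∂_μ u^α + ε Π^{αμ}∂_μ n + n Π^{αμ}∂_μ ε = 0. Then the acceleration a^α = u^μ∂_μ u^α satisfies |a| ~ d^{σ-1} near the boundary, independently of β; hence a is bounded and nonvanishing at the boundary if and only if σ = 1. -/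
open Filter

/-- Physical-vacuum boundary acceleration analysis (model computation, as in the paper):
with the Ansatz `ε = d^σ`, `n = d^β` near the boundary (`d` = distance to the boundary),
if `a` satisfies the (radial model of the) momentum equation
`((1+εγ)/(γ-1)) n a + ε ∂n + n ∂ε = 0`, then `|a| ~ d^{σ-1}` near the boundary
(independently of `β`), and `a` tends to a finite nonzero limit at the boundary
if and only if `σ = 1`. -/
theorem stmt14 (γ σ β : ℝ) (hγ : 1 < γ) (hσ : 0 < σ) (hβ : 0 < β)
    (ε n a : ℝ → ℝ)
    (hε : ∀ d : ℝ, ε d = d ^ σ) (hn : ∀ d : ℝ, n d = d ^ β)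
    (ha : ∀ d : ℝ, 0 < d →
      ((1 + ε d * γ) / (γ - 1)) * n d * a d + ε d * deriv n d + n d * deriv ε d = 0) :
    (∃ c C δ : ℝ, 0 < c ∧ 0 < C ∧ 0 < δ ∧ ∀ d ∈ Set.Ioo (0 : ℝ) δ,
        c * d ^ (σ - 1) ≤ |a d| ∧ |a d| ≤ C * d ^ (σ - 1))
    ∧ ((∃ L : ℝ, L ≠ 0 ∧ Tendsto a (nhdsWithin 0 (Set.Ioi 0)) (nhds L)) ↔ σ = 1) := by
  have hγ1 : (0:ℝ) < γ - 1 := by linarith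
  -- Closed form for a on (0, ∞)
  have key : ∀ d : ℝ, 0 < d →
      a d = -((γ - 1) * (β + σ)) * d ^ (σ - 1) / (1 + γ * d ^ σ) := by
    intro d hd
    have hb : (0:ℝ) < d ^ β := Real.rpow_pos_of_pos hd β
    have hs : (0:ℝ) < d ^ σ := Real.rpow_pos_of_pos hd σ
    have hden : (0:ℝ) < 1 + γ * d ^ σ := by nlinarith
    have hdn : deriv n d = β * d ^ (β - 1) := by
      have h : n = fun x => x ^ β := funext hn
      rw [h]
      exact (Real.hasDerivAt_rpow_const (p := β) (Or.inl hd.ne')).deriv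
    have hde : deriv ε d = σ * d ^ (σ - 1) := by
      have h : ε = fun x => x ^ σ := funext hε
      rw [h]
      exact (Real.hasDerivAt_rpow_const (p := σ) (Or.inl hd.ne')).deriv
    have heq := ha d hd
    rw [hε, hn, hdn, hde] at heq
    have h1 : d ^ (β - 1) = d ^ β / d := by rw [Real.rpow_sub hd, Real.rpow_one]
    have h2 : d ^ (σ - 1) = d ^ σ / d := by rw [Real.rpow_sub hd, Real.rpow_one]
    rw [h1, h2] at heq
    have hfac : d ^ β * d * ((1 + γ * d ^ σ) * (a d * d) + (γ - 1) * (β + σ) * d ^ σ) = 0 := by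
      field_simp at heq
      linear_combination d * heq
    have h3 : (1 + γ * d ^ σ) * (a d * d) + (γ - 1) * (β + σ) * d ^ σ = 0 := by
      rcases mul_eq_zero.1 hfac with h | h
      · exact absurd h (by positivity)
      · exact h
    rw [h2]
    field_simp
    linear_combination h3
  have habs : ∀ d : ℝ, 0 < d →
      |a d| = (γ - 1) * (β + σ) * d ^ (σ - 1) / (1 + γ * d ^ σ) := by
    intro d hd
    have hs : (0:ℝ) < d ^ σ := Real.rpow_pos_of_pos hd σ
    have hs1 : (0:ℝ) < d ^ (σ - 1) := Real.rpow_pos_of_pos hd _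
    have hden : (0:ℝ) < 1 + γ * d ^ σ := by nlinarith
    rw [key d hd, abs_div, abs_of_pos hden, abs_mul, abs_neg,
      abs_of_pos (by positivity : (0:ℝ) < (γ - 1) * (β + σ)), abs_of_pos hs1]
  -- the comparability constants
  have hbounds : ∀ d ∈ Set.Ioo (0:ℝ) 1,
      (γ - 1) * (β + σ) / (1 + γ) * d ^ (σ - 1) ≤ |a d| ∧
      |a d| ≤ (γ - 1) * (β + σ) * d ^ (σ - 1) := by
    intro d hd
    obtain ⟨hd0, hd1⟩ := hd
    have hs : (0:ℝ) < d ^ σ := Real.rpow_pos_of_pos hd0 σ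
    have hs1 : (0:ℝ) < d ^ (σ - 1) := Real.rpow_pos_of_pos hd0 _
    have hsle : d ^ σ ≤ 1 := Real.rpow_le_one hd0.le hd1.le hσ.le
    have hden : (0:ℝ) < 1 + γ * d ^ σ := by nlinarith
    have hdenle : 1 + γ * d ^ σ ≤ 1 + γ := by nlinarith
    rw [habs d hd0]
    constructor
    · rw [div_mul_eq_mul_div]
      exact div_le_div_of_nonneg_left (by positivity) hden hdenle
    · calc (γ - 1) * (β + σ) * d ^ (σ - 1) / (1 + γ * d ^ σ)
          ≤ (γ - 1) * (β + σ) * d ^ (σ - 1) / 1 := by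
            apply div_le_div_of_nonneg_left (by positivity) one_pos
            nlinarith
        _ = (γ - 1) * (β + σ) * d ^ (σ - 1) := by ring
  refine ⟨⟨(γ - 1) * (β + σ) / (1 + γ), (γ - 1) * (β + σ), 1,
    by positivity, by positivity, one_pos, hbounds⟩, ?_, ?_⟩
  · -- forward: nonzero limit → σ = 1
    rintro ⟨L, hL, hT⟩
    by_contra hσ1
    rcases lt_or_gt_of_ne hσ1 with hlt | hgt
    · -- σ < 1 : |a| blows up, contradicting convergence
      have hev1 : ∀ᶠ d in nhdsWithin 0 (Set.Ioi 0), |a d| < |L| + 1 :=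
        hT.abs.eventually (gt_mem_nhds (lt_add_one |L|))
      have hev2 : ∀ᶠ d in nhdsWithin 0 (Set.Ioi 0), d ∈ Set.Ioo (0:ℝ) 1 :=
        Ioo_mem_nhdsGT_of_mem ⟨le_refl 0, one_pos⟩
      -- d ^ (σ-1) → ∞
      have h0 : Tendsto (fun d : ℝ => d ^ (1 - σ)) (nhdsWithin 0 (Set.Ioi 0))
          (nhdsWithin 0 (Set.Ioi 0)) := by
        apply tendsto_nhdsWithin_of_tendsto_nhds_of_eventually_within
        · have hc : ContinuousAt (fun d : ℝ => d ^ (1 - σ)) 0 :=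
            Real.continuousAt_rpow_const 0 (1 - σ) (Or.inr (by linarith))
          have := hc.tendsto
          rw [Real.zero_rpow (by linarith : 1 - σ ≠ 0)] at this
          exact this.mono_left nhdsWithin_le_nhds
        · filter_upwards [self_mem_nhdsWithin] with d hd
          exact Real.rpow_pos_of_pos hd _
      have h1 : Tendsto (fun d : ℝ => (d ^ (1 - σ))⁻¹) (nhdsWithin 0 (Set.Ioi 0)) atTop :=
        h0.inv_tendsto_nhdsGT_zero
      have h2 : Tendsto (fun d : ℝ => (γ - 1) * (β + σ) / (1 + γ) * d ^ (σ - 1))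
          (nhdsWithin 0 (Set.Ioi 0)) atTop := by
        have h1' : Tendsto (fun d : ℝ => d ^ (σ - 1)) (nhdsWithin 0 (Set.Ioi 0)) atTop := by
          apply h1.congr'
          filter_upwards [self_mem_nhdsWithin] with d hd
          rw [← Real.rpow_neg (le_of_lt hd)]
          norm_num
        exact h1'.const_mul_atTop (by positivity)
      have hev3 : ∀ᶠ d in nhdsWithin 0 (Set.Ioi 0),
          |L| + 1 < (γ - 1) * (β + σ) / (1 + γ) * d ^ (σ - 1) :=
        h2.eventually_gt_atTop (|L| + 1)
      obtain ⟨d, hd1, hd2, hd3⟩ := (hev1.and (hev2.and hev3)).exists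
      have := (hbounds d hd2).1
      linarith
    · -- σ > 1 : a → 0, so L = 0, contradiction
      have hz : Tendsto a (nhdsWithin 0 (Set.Ioi 0)) (nhds 0) := by
        have hb1 : ∀ᶠ d in nhdsWithin 0 (Set.Ioi 0),
            ‖a d‖ ≤ (γ - 1) * (β + σ) * d ^ (σ - 1) := by
          filter_upwards [Ioo_mem_nhdsGT_of_mem (Set.mem_Ico.2 ⟨le_refl (0:ℝ), one_pos⟩)]
            with d hd
          exact (hbounds d hd).2
        have hb2 : Tendsto (fun d : ℝ => (γ - 1) * (β + σ) * d ^ (σ - 1))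
            (nhdsWithin 0 (Set.Ioi 0)) (nhds 0) := by
          have hc : ContinuousAt (fun d : ℝ => d ^ (σ - 1)) 0 :=
            Real.continuousAt_rpow_const 0 (σ - 1) (Or.inr (by linarith))
          have h := hc.tendsto
          rw [Real.zero_rpow (by linarith : σ - 1 ≠ 0)] at h
          have h' : Tendsto (fun d : ℝ => d ^ (σ - 1)) (nhdsWithin 0 (Set.Ioi 0)) (nhds 0) :=
            h.mono_left nhdsWithin_le_nhds
          have := h'.const_mul ((γ - 1) * (β + σ))
          simpa using this
        exact squeeze_zero_norm' hb1 hb2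
      exact hL (tendsto_nhds_unique hT hz)
  · -- backward: σ = 1 gives a nonzero limit
    rintro rfl
    refine ⟨-((γ - 1) * (β + 1)), by nlinarith, ?_⟩
    have hfun : Tendsto (fun d : ℝ => -((γ - 1) * (β + 1)) / (1 + γ * d))
        (nhdsWithin 0 (Set.Ioi 0)) (nhds (-((γ - 1) * (β + 1)))) := by
      have hc : ContinuousAt (fun d : ℝ => -((γ - 1) * (β + 1)) / (1 + γ * d)) 0 := by
        apply ContinuousAt.div continuousAt_const (by fun_prop)
        norm_num
      have h := hc.tendsto
      norm_num at h
      exact h.mono_left nhdsWithin_le_nhds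
    apply hfun.congr'
    filter_upwards [self_mem_nhdsWithin] with d hd
    rw [key d hd]
    norm_num [Real.rpow_one]
end
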